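/- arXiv:2109.05001 — 3 statements merged into one kernel-verified Lean document; each statement's English description precedes it below -/
import Mathlib

section
/- Let $M_j = 2^j$ and let $(r_j)_{j\ge 1}$ be a sequence of positive reals with $c_1 = 1$ and $c_j = \prod_{k=2}^{j} r_{k-1}^{M_{k-1}-M_k}$ for $j \ge 2$. If $k \ge 3$ and $\sqrt{r_k} \ge r_j$ for all $1 \le j < k$, then $r_k^{M_k} \cdot c_k \ge r_k^{M_{k-1}+1}$. -/
/-!
Every factor `r (j-1) ^ (-2^(j-1))` of `c_k` is at least `(√r_k) ^ (-2^(j-1))`, and the exponents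
sum to `2^k - 2`, so `c_k ≥ √r_k ^ (-(2^k - 2)) = r_k ^ (-(2^(k-1) - 1))`. Multiplying by
`r_k ^ 2^k` leaves `r_k ^ (2^(k-1) + 1)`.
-/

open Finset

theorem sum_Icc_two_pow_pred {k : ℕ} (hk : 1 ≤ k) : ∑ j ∈ Icc 2 k, 2 ^ (j - 1) = 2 ^ k - 2 := by
  induction k, hk using Nat.le_induction with
  | base => rfl
  | succ n hn ih =>
    rw [sum_Icc_succ_top (by omega), ih, Nat.add_sub_cancel, pow_succ]
    have : 2 ≤ 2 ^ n := Nat.le_self_pow (by omega) 2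
    omega

theorem prod_Icc_pow_two_pow_pred_le {r : ℕ → ℝ} {k : ℕ} {x : ℝ} (hk : 1 ≤ k)
    (h0 : ∀ j, 1 ≤ j → j < k → 0 ≤ r j) (hx : ∀ j, 1 ≤ j → j < k → r j ≤ x) :
    ∏ j ∈ Icc 2 k, r (j - 1) ^ 2 ^ (j - 1) ≤ x ^ (2 ^ k - 2) := by
  rw [← sum_Icc_two_pow_pred hk, ← prod_pow_eq_pow_sum]
  refine prod_le_prod (fun j hj => ?_) fun j hj => ?_ <;> rw [mem_Icc] at hj
  · exact pow_nonneg (h0 _ (by omega) (by omega)) _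
  · exact pow_le_pow_left₀ (h0 _ (by omega) (by omega)) (hx _ (by omega) (by omega)) _

theorem zpow_neg_two_pow {G₀ : Type*} [GroupWithZero G₀] (x : G₀) (n : ℕ) :
    x ^ (-(2 : ℤ) ^ n) = (x ^ 2 ^ n)⁻¹ := by
  rw [zpow_neg, ← zpow_natCast]; push_cast; rfl

theorem sqrt_pow_two_pow_sub_two {x : ℝ} (hx : 0 ≤ x) {k : ℕ} (hk : 1 ≤ k) :
    √x ^ (2 ^ k - 2) = x ^ (2 ^ (k - 1) - 1) := by
  obtain ⟨n, rfl⟩ : ∃ n, k = n + 1 := ⟨k - 1, by omega⟩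
  rw [Nat.add_sub_cancel, pow_succ', ← Nat.mul_sub_one, pow_mul, Real.sq_sqrt hx]

theorem pow_two_pow_eq_mul {M : Type*} [Monoid M] (x : M) {k : ℕ} (hk : 1 ≤ k) :
    x ^ 2 ^ k = x ^ (2 ^ (k - 1) + 1) * x ^ (2 ^ (k - 1) - 1) := by
  obtain ⟨n, rfl⟩ : ∃ n, k = n + 1 := ⟨k - 1, by omega⟩
  have : 1 ≤ 2 ^ n := Nat.one_le_two_pow
  rw [← pow_add, Nat.add_sub_cancel, pow_succ]
  congr 1
  omega

theorem stmt_0 (r : ℕ → ℝ) (hr : ∀ j, 1 ≤ j → 0 < r j) (k : ℕ) (hk : 3 ≤ k)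
    (hsqrt : ∀ j, 1 ≤ j → j < k → Real.sqrt (r k) ≥ r j) :
    r k ^ (2 ^ k) * (∏ j ∈ Finset.Icc 2 k, (r (j - 1)) ^ (-((2 : ℤ) ^ (j - 1)))) ≥
      r k ^ (2 ^ (k - 1) + 1) := by
  have hrk : 0 < r k := hr k (by omega)
  have hP : ∏ j ∈ Icc 2 k, r (j - 1) ^ 2 ^ (j - 1) ≤ r k ^ (2 ^ (k - 1) - 1) := by
    rw [← sqrt_pow_two_pow_sub_two hrk.le (by omega)]
    exact prod_Icc_pow_two_pow_pred_le (by omega) (fun j hj _ => (hr j hj).le) hsqrt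
  have hP_pos : 0 < ∏ j ∈ Icc 2 k, r (j - 1) ^ 2 ^ (j - 1) :=
    prod_pos fun j hj => pow_pos (hr _ (by rw [mem_Icc] at hj; omega)) _
  simp only [zpow_neg_two_pow, prod_inv_distrib]
  rw [ge_iff_le, le_mul_inv_iff₀ hP_pos, pow_two_pow_eq_mul (r k) (by omega : 1 ≤ k)]
  gcongr
end

section
/- Define sequences by $M_j = 2^j$, $r_1 = 16$, $c_1 = 1$, $c_j = \prod_{k=2}^{j} r_{k-1}^{-M_{k-1}}$, and $r_{j+1} = c_j (r_j/2)^{M_j}$ for $j \ge 2$ (with $r_2 = c_1 (r_1/2)^{M_1}$). Then $r_2 > r_1$, and for all $k \ge 2$ one has $\sqrt{r_{k+1}} \ge r_k$. In particular $(r_k)$ is strictly increasing. -/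
/-!
Dividing the recursion at `j + 1` by the one at `j` eliminates the product `c_j`:
`r (j + 2) = r (j + 1) * (r (j + 1) ^ 2 / (2 * r j ^ 2)) ^ 2 ^ j`.
If `b = r (j + 1) ≥ r j ^ 2`, the bracket is at least `b / 2`, and `(b / 2) ^ 2 ≥ b` once
`b ≥ 4`, so `r (j + 2) ≥ r (j + 1) ^ 2`. Starting from `r 2 = 64`, `r 3 = 2 ^ 12 = 64 ^ 2`, this
propagates by induction.
-/

theorem sq_le_mul_pow_of_sq_le {a b : ℝ} {m : ℕ} (ha : 0 < a) (hab : a ^ 2 ≤ b) (hb : 4 ≤ b)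
    (hm : 2 ≤ m) : b ^ 2 ≤ b * (b ^ 2 / (2 * a ^ 2)) ^ m := by
  have hhalf : b / 2 ≤ b ^ 2 / (2 * a ^ 2) := by
    rw [div_le_div_iff₀ two_pos (by positivity)]
    nlinarith
  have hbase : 1 ≤ b / 2 := by linarith
  calc b ^ 2 = b * b := sq b
    _ ≤ b * (b / 2) ^ 2 := by gcongr; nlinarith
    _ ≤ b * (b / 2) ^ m := by gcongr
    _ ≤ b * (b ^ 2 / (2 * a ^ 2)) ^ m := by gcongr

section

variable {r : ℕ → ℝ}
  (hrec : ∀ j, 1 ≤ j →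
      r (j + 1) = (∏ k ∈ Finset.Icc 2 j, (r (k - 1)) ^ (-((2 : ℤ) ^ (k - 1)))) *
        (r j / 2) ^ (2 ^ j))
include hrec

theorem succ_succ_eq_of_rec {j : ℕ} (hj : 1 ≤ j) (hr : r j ≠ 0) :
    r (j + 2) = r (j + 1) * (r (j + 1) ^ 2 / (2 * r j ^ 2)) ^ 2 ^ j := by
  have hP := hrec j hj
  have hnext := hrec (j + 1) (by omega)
  rw [Finset.prod_Icc_succ_top (by omega), Nat.add_sub_cancel, zpow_neg,
    show (2 : ℤ) ^ j = (2 ^ j : ℕ) by norm_cast, zpow_natCast] at hnext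
  rw [eq_comm, ← eq_div_iff (by positivity)] at hP
  rw [hnext, hP, pow_succ 2 j]
  generalize 2 ^ j = m
  simp only [div_pow, mul_pow, ← pow_mul]
  field_simp
  ring

variable (h1 : r 1 = 16)
include h1

theorem rec_two : r 2 = 64 := by
  rw [hrec 1 le_rfl, h1, Finset.Icc_eq_empty (by norm_num)]
  norm_num

theorem four_le_and_sq_le_succ {k : ℕ} (hk : 2 ≤ k) : 4 ≤ r k ∧ r k ^ 2 ≤ r (k + 1) := by
  induction k, hk using Nat.le_induction with
  | base =>
    rw [succ_succ_eq_of_rec hrec le_rfl (by norm_num [h1]), rec_two hrec h1, h1]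
    norm_num
  | succ n hn ih =>
    obtain ⟨hn4, hsq⟩ := ih
    refine ⟨by nlinarith, ?_⟩
    rw [succ_succ_eq_of_rec hrec (by omega) (by positivity)]
    exact sq_le_mul_pow_of_sq_le (by positivity) hsq (by nlinarith)
      (Nat.le_self_pow (by omega) 2)

end

theorem stmt_1 (r : ℕ → ℝ) (h1 : r 1 = 16)
    (hrec : ∀ j, 1 ≤ j →
      r (j + 1) = (∏ k ∈ Finset.Icc 2 j, (r (k - 1)) ^ (-((2 : ℤ) ^ (k - 1)))) *
        (r j / 2) ^ (2 ^ j)) :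
    r 2 > r 1 ∧ (∀ k, 2 ≤ k → Real.sqrt (r (k + 1)) ≥ r k) ∧
      (∀ k, 1 ≤ k → r k < r (k + 1)) := by
  have hr2 := rec_two hrec h1
  refine ⟨by norm_num [hr2, h1], fun k hk => ?_, fun k hk => ?_⟩
  · exact Real.le_sqrt_of_sq_le (four_le_and_sq_le_succ hrec h1 hk).2
  · obtain rfl | hk := eq_or_lt_of_le hk
    · norm_num [hr2, h1]
    · obtain ⟨h4, hsq⟩ := four_le_and_sq_le_succ hrec h1 hk
      nlinarith
end

section
/- Let $g$ be holomorphic on the closed annulus $\overline{A(a,b)} = \{z : a \le |z| \le b\}$ with $0 < a < b$, and let $0 < c < d$. If $|g(z)| \le c$ for all $|z| = a$ and $|g(z)| \ge d$ for all $|z| = b$, then the open annulus $A(c,d) = \{w : c < |w| < d\}$ is contained in $g(A(a,b))$. -/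
/-!
Since `‖g‖ ≤ c` on the inner circle and `‖g‖ ≥ d` on the outer one, the boundary of the closed
annulus `K` is mapped outside `W = A(c, d)`. Hence `W` is covered by the two disjoint open sets
`g(A(a, b))` (open by the open mapping theorem; `g` cannot be constant, its boundary values differ)
and the complement of the compact set `g(K)`. The intermediate value theorem on the segment `[a, b]`
shows that `W` meets `g(A(a, b))`, so the connected set `W` lies inside it.
-/

open Set Metric

section Annulus

variable {E : Type*} [NormedAddCommGroup E]

lemma isOpen_annulus (a b : ℝ) : IsOpen {z : E | a < ‖z‖ ∧ ‖z‖ < b} :=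
  isOpen_Ioo.preimage continuous_norm

lemma isCompact_closedAnnulus [ProperSpace E] (a b : ℝ) :
    IsCompact {z : E | a ≤ ‖z‖ ∧ ‖z‖ ≤ b} :=
  (isCompact_closedBall 0 b).of_isClosed_subset (isClosed_Icc.preimage continuous_norm)
    fun _ hz => mem_closedBall_zero_iff.2 hz.2

lemma annulus_eq_image_smul_sphere [NormedSpace ℝ E] {a : ℝ} (ha : 0 ≤ a) (b : ℝ) :
    {z : E | a < ‖z‖ ∧ ‖z‖ < b} =
      (fun p : ℝ × E => p.1 • p.2) '' (Ioo a b ×ˢ sphere 0 1) := by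
  ext z
  constructor
  · rintro ⟨haz, hzb⟩
    have hz : ‖z‖ ≠ 0 := (ha.trans_lt haz).ne'
    refine ⟨(‖z‖, ‖z‖⁻¹ • z), ⟨⟨haz, hzb⟩, ?_⟩, ?_⟩
    · simp [norm_smul, hz]
    · simp [smul_smul, hz]
  · rintro ⟨⟨r, u⟩, ⟨⟨har, hrb⟩, hu⟩, rfl⟩
    have hnorm : ‖r • u‖ = r := by
      rw [norm_smul, mem_sphere_zero_iff_norm.1 hu, mul_one, Real.norm_of_nonneg (ha.trans har.le)]
    exact ⟨by rwa [hnorm], by rwa [hnorm]⟩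

lemma isPreconnected_annulus [NormedSpace ℝ E] (h : 1 < Module.rank ℝ E) {a : ℝ} (ha : 0 ≤ a)
    (b : ℝ) : IsPreconnected {z : E | a < ‖z‖ ∧ ‖z‖ < b} := by
  rw [annulus_eq_image_smul_sphere ha]
  exact (isPreconnected_Ioo.prod (isPreconnected_sphere h 0 1)).image _
    (continuous_fst.smul continuous_snd).continuousOn

end Annulus

lemma Complex.isPreconnected_annulus {a : ℝ} (ha : 0 ≤ a) (b : ℝ) :
    IsPreconnected {z : ℂ | a < ‖z‖ ∧ ‖z‖ < b} :=
  _root_.isPreconnected_annulus (by simp [Complex.rank_real_complex]) ha b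

theorem IsPreconnected.subset_image_of_disjoint_image_diff {X Y : Type*} [TopologicalSpace X]
    [TopologicalSpace Y] [T2Space Y] {f : X → Y} {U K : Set X} {W : Set Y}
    (hW : IsPreconnected W) (hK : IsCompact K) (hf : ContinuousOn f K) (hUK : U ⊆ K)
    (hU : IsOpen (f '' U)) (hdisj : Disjoint W (f '' (K \ U))) (hmeet : (W ∩ f '' U).Nonempty) :
    W ⊆ f '' U := by
  have hcover : W ⊆ f '' U ∪ (f '' K)ᶜ := by
    refine fun w hw => or_iff_not_imp_right.2 fun hwK => ?_
    obtain ⟨z, hzK, rfl⟩ := not_not.1 hwK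
    by_contra hwU
    exact disjoint_left.1 hdisj hw ⟨z, ⟨hzK, fun hzU => hwU ⟨z, hzU, rfl⟩⟩, rfl⟩
  exact hW.subset_left_of_subset_union hU (hK.image_of_continuousOn hf).isClosed.isOpen_compl
    (disjoint_compl_right_iff_subset.2 (image_mono hUK)) hcover hmeet

section RealSegment

variable {a b : ℝ}

lemma Complex.ofReal_mem_annulus (ha : 0 ≤ a) {r : ℝ} (hr : r ∈ Ioo a b) :
    (r : ℂ) ∈ {z : ℂ | a < ‖z‖ ∧ ‖z‖ < b} := by
  rw [mem_ofPred_eq, Complex.norm_of_nonneg (ha.trans hr.1.le)]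
  exact hr

lemma Complex.ofReal_mem_closedAnnulus (ha : 0 ≤ a) {r : ℝ} (hr : r ∈ Icc a b) :
    (r : ℂ) ∈ {z : ℂ | a ≤ ‖z‖ ∧ ‖z‖ ≤ b} := by
  rw [mem_ofPred_eq, Complex.norm_of_nonneg (ha.trans hr.1)]
  exact hr

variable {g : ℂ → ℂ}

lemma ContinuousOn.comp_ofReal_Icc (hg : ContinuousOn g {z : ℂ | a ≤ ‖z‖ ∧ ‖z‖ ≤ b})
    (ha : 0 ≤ a) : ContinuousOn (fun r : ℝ => g r) (Icc a b) :=
  hg.comp Complex.continuous_ofReal.continuousOn fun _ => Complex.ofReal_mem_closedAnnulus ha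

lemma not_exists_eq_const_on_annulus (ha : 0 ≤ a)
    (hg : ContinuousOn g {z : ℂ | a ≤ ‖z‖ ∧ ‖z‖ ≤ b}) (hab : a < b) (hne : g a ≠ g b) :
    ¬ ∃ w, ∀ z ∈ {z : ℂ | a < ‖z‖ ∧ ‖z‖ < b}, g z = w := by
  rintro ⟨w, hw⟩
  have hconst : EqOn (fun r : ℝ => g r) (fun _ => w) (Icc a b) :=
    EqOn.of_subset_closure (fun _ hr => hw _ (Complex.ofReal_mem_annulus ha hr))
      (hg.comp_ofReal_Icc ha) continuousOn_const Ioo_subset_Icc_self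
      (closure_Ioo hab.ne).symm.subset
  exact hne ((hconst (left_mem_Icc.2 hab.le)).trans (hconst (right_mem_Icc.2 hab.le)).symm)

lemma exists_mem_annulus_norm_eq (ha : 0 ≤ a)
    (hg : ContinuousOn g {z : ℂ | a ≤ ‖z‖ ∧ ‖z‖ ≤ b}) (hab : a ≤ b) {t : ℝ}
    (ht : t ∈ Ioo ‖g a‖ ‖g b‖) :
    ∃ z ∈ {z : ℂ | a < ‖z‖ ∧ ‖z‖ < b}, ‖g z‖ = t := by
  obtain ⟨r, hr, hgr⟩ :=
    intermediate_value_Ioo hab (continuous_norm.comp_continuousOn (hg.comp_ofReal_Icc ha)) ht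
  exact ⟨r, Complex.ofReal_mem_annulus ha hr, hgr⟩

end RealSegment

lemma disjoint_annulus_image_closedAnnulus_diff {g : ℂ → ℂ} {a b c d : ℝ}
    (hinner : ∀ z : ℂ, ‖z‖ = a → ‖g z‖ ≤ c) (houter : ∀ z : ℂ, ‖z‖ = b → d ≤ ‖g z‖) :
    Disjoint {w : ℂ | c < ‖w‖ ∧ ‖w‖ < d}
      (g '' ({z : ℂ | a ≤ ‖z‖ ∧ ‖z‖ ≤ b} \ {z : ℂ | a < ‖z‖ ∧ ‖z‖ < b})) := by
  refine disjoint_left.2 ?_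
  rintro _ ⟨hcw, hwd⟩ ⟨z, ⟨⟨haz, hzb⟩, hzA⟩, rfl⟩
  rcases not_and_or.1 hzA with hza | hzb'
  · exact not_lt_of_ge (hinner z (le_antisymm (not_lt.1 hza) haz)) hcw
  · exact not_lt_of_ge (houter z (le_antisymm hzb (not_lt.1 hzb'))) hwd

theorem stmt_7 (g : ℂ → ℂ) (a b c d : ℝ) (ha : 0 < a) (hab : a < b) (hc : 0 < c) (hcd : c < d)
    (hcont : ContinuousOn g {z : ℂ | a ≤ ‖z‖ ∧ ‖z‖ ≤ b})
    (hdiff : DifferentiableOn ℂ g {z : ℂ | a < ‖z‖ ∧ ‖z‖ < b})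
    (hinner : ∀ z : ℂ, ‖z‖ = a → ‖g z‖ ≤ c)
    (houter : ∀ z : ℂ, ‖z‖ = b → ‖g z‖ ≥ d) :
    {w : ℂ | c < ‖w‖ ∧ ‖w‖ < d} ⊆
      g '' {z : ℂ | a < ‖z‖ ∧ ‖z‖ < b} := by
  have hga : ‖g a‖ ≤ c := hinner _ (Complex.norm_of_nonneg ha.le)
  have hgb : d ≤ ‖g b‖ := houter _ (Complex.norm_of_nonneg (ha.trans hab).le)
  have hopen : IsOpen (g '' {z : ℂ | a < ‖z‖ ∧ ‖z‖ < b}) :=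
    ((hdiff.analyticOnNhd (isOpen_annulus a b)).is_constant_or_isOpen
      (Complex.isPreconnected_annulus ha.le b)).resolve_left
      (not_exists_eq_const_on_annulus ha.le hcont hab fun h => by linarith [congrArg norm h])
      _ subset_rfl (isOpen_annulus a b)
  obtain ⟨z, hz, hgz⟩ := exists_mem_annulus_norm_eq ha.le hcont hab.le
    (t := (c + d) / 2) ⟨by linarith, by linarith⟩
  refine (Complex.isPreconnected_annulus hc.le d).subset_image_of_disjoint_image_diff
    (isCompact_closedAnnulus a b) hcont (fun z hz => ⟨hz.1.le, hz.2.le⟩) hopen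
    (disjoint_annulus_image_closedAnnulus_diff hinner houter)
    ⟨g z, ⟨by linarith, by linarith⟩, z, hz, rfl⟩
end
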